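/- arXiv:2005.05423 — 3 statements merged into one kernel-verified Lean document; each statement's English description precedes it below -/
import Mathlib

section
/- Let k ≥ 1 and let s be a finite sequence over a set S in which some element occurs at least k+1 times. Then s contains a contiguous subsequence that is a k-cycle, i.e., a contiguous subsequence whose first and last entries coincide, in which at least one element occurs exactly k+1 times, and in which every element occurs at most k+1 times. -/
set_option autoImplicit false

/-! ## Syntax: arguments, atoms, rules -/

/-- Rule arguments: constants or variables (variables are natural numbers). -/
inductive RArg (C : Type) : Type
  | const : C → RArg C
  | var : ℕ → RArg C

/-- Atoms: a predicate applied to a list of arguments. -/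
structure Atom (P τ : Type) : Type where
  pred : P
  args : List τ

/-- An existential rule: finite sets of body and head atoms whose arguments are
constants and variables. -/
structure Rule (P C : Type) : Type where
  body : Finset (Atom P (RArg C))
  head : Finset (Atom P (RArg C))

instance {P C : Type} : Inhabited (Rule P C) := ⟨⟨∅, ∅⟩⟩

def RArg.toVar? {C : Type} : RArg C → Option ℕ
  | RArg.var v => some v
  | RArg.const _ => none

/-- The list of variables occurring in (the argument list of) an atom. -/
def Atom.varsL {P C : Type} (a : Atom P (RArg C)) : List ℕ :=
  a.args.filterMap RArg.toVar?

/-- The (universal) variables of a rule: the variables of its body. -/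
def Rule.bodyVars {P C : Type} (r : Rule P C) : Finset ℕ :=
  r.body.biUnion fun a => a.varsL.toFinset

def Rule.headVars {P C : Type} (r : Rule P C) : Finset ℕ :=
  r.head.biUnion fun a => a.varsL.toFinset

/-- Frontier variables: body variables occurring in the head. -/
def Rule.frontier {P C : Type} (r : Rule P C) : Finset ℕ :=
  r.bodyVars ∩ r.headVars

/-- Existential variables: head variables not occurring in the body. -/
def Rule.exVars {P C : Type} (r : Rule P C) : Finset ℕ :=
  r.headVars \ r.bodyVars

/-- A canonical listing of the frontier variables of a rule. -/
def Rule.frontierList {P C : Type} (r : Rule P C) : List ℕ :=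
  r.frontier.sort (· ≤ ·)

/-- A rule is simple if no variable occurs more than once in its body. -/
def Rule.IsSimple {P C : Type} (r : Rule P C) : Prop :=
  (∀ a ∈ r.body, a.varsL.Nodup) ∧
    ∀ a ∈ r.body, ∀ b ∈ r.body, a ≠ b → ∀ v ∈ a.varsL, v ∉ b.varsL

/-! ## Ground terms, instances, databases -/

/-- Ground terms over constants `C` and function symbols `F`. -/
inductive GTerm (C F : Type) : Type
  | const : C → GTerm C F
  | func : F → List (GTerm C F) → GTerm C F

/-- The height (nesting depth) of a ground term; constants have height 0. -/
def GTerm.height {C F : Type} : GTerm C F → ℕ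
  | .const _ => 0
  | .func _ ts => 1 + (ts.attach.map (fun t => GTerm.height t.1)).foldr max 0
decreasing_by
  simp_wf
  have := List.sizeOf_lt_of_mem t.2
  omega

/-- Ground constants: the constants `C` occurring in rules together with the
fresh indexed constants `⟨v, i⟩` (and the fresh constant `∗ = inr (0,0)`). -/
abbrev GConst (C : Type) : Type := C ⊕ (ℕ × ℕ)

/-- Skolem function symbols: one fresh symbol `f_{r,z}` for each rule `r` and
existential variable `z`. -/
abbrev SkFun (P C : Type) : Type := Rule P C × ℕ

/-- Ground terms built from constants and skolem function symbols. -/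
abbrev GT (P C : Type) : Type := GTerm (GConst C) (SkFun P C)

abbrev GAtom (P C : Type) : Type := Atom P (GT P C)

/-- An instance is a set of atoms over ground terms. -/
abbrev Inst (P C : Type) : Type := Set (GAtom P C)

/-- An assignment of ground terms to variables. -/
abbrev Assign (P C : Type) : Type := ℕ → GT P C

/-- A database: a finite instance all of whose terms are constants. -/
def IsDatabase {P C : Type} (I : Inst P C) : Prop :=
  I.Finite ∧ ∀ a ∈ I, ∀ t ∈ a.args, ∃ c : GConst C, t = GTerm.const c

/-! ## Applying assignments and substitutions -/

def RArg.interp {P C : Type} (h : Assign P C) : RArg C → GT P C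
  | RArg.const c => GTerm.const (Sum.inl c)
  | RArg.var v => h v

def Atom.interp {P C : Type} (h : Assign P C) (a : Atom P (RArg C)) : GAtom P C :=
  ⟨a.pred, a.args.map (RArg.interp h)⟩

/-- The image `h(body(r))` of the body of a rule under an assignment. -/
def Rule.bodyI {P C : Type} (r : Rule P C) (h : Assign P C) : Inst P C :=
  (Atom.interp h) '' ↑r.body

/-- The image `h(head(r))` of the head of a rule under an assignment. -/
def Rule.headI {P C : Type} (r : Rule P C) (h : Assign P C) : Inst P C :=
  (Atom.interp h) '' ↑r.head

/-- The skolem extension of an assignment: each existential variable `z` of `r`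
is sent to the skolem term `f_{r,z}(x)`, where `x` lists the frontier variables. -/
def Rule.skolemExt {P C : Type} (r : Rule P C) (h : Assign P C) : Assign P C :=
  fun v => if v ∈ r.exVars then GTerm.func (r, v) (r.frontierList.map h) else h v

/-- `h(sk(head(r)))`: the atoms added when the trigger `(r,h)` is applied. -/
def Rule.skApply {P C : Type} (r : Rule P C) (h : Assign P C) : Inst P C :=
  r.headI (r.skolemExt h)

/-- A ground substitution: fixes all constants (skolem terms are nulls and may
be mapped anywhere). -/
def IsGSubst {P C : Type} (f : GT P C → GT P C) : Prop :=
  ∀ c : GConst C, f (GTerm.const c) = GTerm.const c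

def Atom.mapArgs {P C : Type} (f : GT P C → GT P C) (a : GAtom P C) : GAtom P C :=
  ⟨a.pred, a.args.map f⟩

/-! ## Triggers, the restricted chase, chained sequences, activeness -/

/-- `(r,h)` is a trigger on `I`: `h` is a homomorphism from `body(r)` to `I`. -/
def Trigger {P C : Type} (r : Rule P C) (h : Assign P C) (I : Inst P C) : Prop :=
  r.bodyI h ⊆ I

/-- An active trigger: no extension of `h` on the existential variables
satisfies the head in `I`. -/
def ActiveTrigger {P C : Type} (r : Rule P C) (h : Assign P C) (I : Inst P C) : Prop :=
  Trigger r h I ∧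
    ∀ h' : Assign P C, (∀ v ∈ r.bodyVars, h' v = h v) → ¬ (r.headI h' ⊆ I)

/-- `π` leads to a restricted chase sequence `Is 0, …, Is π.length` from `Is 0 = I0`,
generated by the active triggers `(π.get i, hs i)`. -/
def RCSeq {P C : Type} (π : List (Rule P C)) (I0 : Inst P C)
    (Is : ℕ → Inst P C) (hs : ℕ → Assign P C) : Prop :=
  Is 0 = I0 ∧ ∀ i < π.length,
    ActiveTrigger (π.getD i default) (hs i) (Is i) ∧
      Is (i + 1) = Is i ∪ (π.getD i default).skApply (hs i)

/-- `π` leads to a skolem chase sequence (triggers need not be active). -/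
def SkSeq {P C : Type} (π : List (Rule P C)) (I0 : Inst P C)
    (Is : ℕ → Inst P C) (hs : ℕ → Assign P C) : Prop :=
  Is 0 = I0 ∧ ∀ i < π.length,
    Trigger (π.getD i default) (hs i) (Is i) ∧
      Is (i + 1) = Is i ∪ (π.getD i default).skApply (hs i)

/-- Rule `r'` depends on rule `r` w.r.t. instance `I`. -/
def RuleDependsOn {P C : Type} (r' r : Rule P C) (I : Inst P C) : Prop :=
  ∃ h g : Assign P C,
    r.bodyI h ⊆ I ∧ r'.bodyI g ⊆ I ∪ r.skApply h ∧ ¬ (r'.bodyI g ⊆ I)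

/-- The chained property of a restricted chase sequence for `π`: some projection of
`π` preserving the end points is linked by the depends-on relation. -/
def Chained {P C : Type} (π : List (Rule P C)) (I0 : Inst P C)
    (Is : ℕ → Inst P C) (hs : ℕ → Assign P C) : Prop :=
  ∃ (m : ℕ) (j : ℕ → ℕ),
    1 ≤ m ∧
    (∀ i, i + 1 < m → j i < j (i + 1)) ∧
    j 0 = 0 ∧
    j (m - 1) + 1 = π.length ∧
    (∀ i < m, j i < π.length) ∧
    ∀ i, i + 1 < m →
      RuleDependsOn (π.getD (j (i + 1)) default) (π.getD (j i) default)
        (if i = 0 then I0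
         else Is (j i + 1) \ (π.getD (j i) default).skApply (hs (j i)))

/-- A path `π` is active w.r.t. `I0` if there is a chained restricted chase
sequence for `π` starting from `I0`. -/
def ActivePath {P C : Type} (π : List (Rule P C)) (I0 : Inst P C) : Prop :=
  ∃ (Is : ℕ → Inst P C) (hs : ℕ → Assign P C), RCSeq π I0 Is hs ∧ Chained π I0 Is hs

/-! ## Restricted critical databases and renaming -/

/-- The assignment `e_i` sending variable `v` to the fresh indexed constant `⟨v,i⟩`. -/
def idxAssign {P C : Type} (i : ℕ) : Assign P C :=
  fun v => GTerm.const (Sum.inr (v, i))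

/-- The restricted critical database `I^π` of a path `π`. -/
def criticalDB {P C : Type} (π : List (Rule P C)) : Inst P C :=
  ⋃ i ∈ Finset.range π.length, (π.getD i default).bodyI (idxAssign i)

/-- A renaming function: each indexed constant is mapped to itself or to an
indexed constant with strictly smaller index. -/
def IsRenaming (rn : ℕ × ℕ → ℕ × ℕ) : Prop :=
  ∀ p : ℕ × ℕ, rn p = p ∨ (rn p).2 < p.2

def renameGT {P C : Type} (rn : ℕ × ℕ → ℕ × ℕ) : GT P C → GT P C
  | GTerm.const (Sum.inr p) => GTerm.const (Sum.inr (rn p))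
  | t => t

def renameInst {P C : Type} (rn : ℕ × ℕ → ℕ × ℕ) (I : Inst P C) : Inst P C :=
  (fun a => Atom.mapArgs (renameGT rn) a) '' I

/-! ## Cycles, cycle functions, k-safe -/

/-- The number of occurrences of `x` in the list `σ`. -/
noncomputable def occCount {α : Type} (σ : List α) (x : α) : ℕ :=
  {i : Fin σ.length | σ.get i = x}.ncard

/-- A `k`-cycle: a nonempty sequence whose first and last entries coincide, in
which some element occurs exactly `k+1` times and every element occurs at most
`k+1` times. -/
def IsKCycle {α : Type} (k : ℕ) (σ : List α) : Prop :=
  σ ≠ [] ∧ σ.head? = σ.getLast? ∧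
    (∃ x ∈ σ, occCount σ x = k + 1) ∧ ∀ x ∈ σ, occCount σ x ≤ k + 1

/-- `R` belongs to `k`-safe(Φ): every `k`-cycle based on `R` mapped to `F`
(i.e. not satisfying `Φ`) is safe, i.e. active w.r.t. no database. -/
def kSafe {P C : Type} (R : Set (Rule P C)) (k : ℕ) (Φ : List (Rule P C) → Prop) : Prop :=
  ∀ σ : List (Rule P C), (∀ r ∈ σ, r ∈ R) → IsKCycle k σ → ¬ Φ σ →
    ∀ I0 : Inst P C, IsDatabase I0 → ¬ ActivePath σ I0

/-- The cycle function derived from a class `Δ` of rule sets: a cycle is mapped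
to `T` iff its set of distinct rules belongs to `Δ`. -/
def PhiDelta {P C : Type} (Δ : Set (Set (Rule P C))) : List (Rule P C) → Prop :=
  fun σ => {r | r ∈ σ} ∈ Δ

/-! ## The skolem chase and all-instance termination -/

def skStep {P C : Type} (R : Set (Rule P C)) (I : Inst P C) : Inst P C :=
  I ∪ {a | ∃ r ∈ R, ∃ h : Assign P C, Trigger r h I ∧ a ∈ r.skApply h}

def skIter {P C : Type} (R : Set (Rule P C)) (I : Inst P C) : ℕ → Inst P C
  | 0 => I
  | n + 1 => skStep R (skIter R I n)

/-- The skolem chase `chase_sk(I,R)`. -/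
def skChase {P C : Type} (R : Set (Rule P C)) (I : Inst P C) : Inst P C :=
  ⋃ n, skIter R I n

/-- `R` is all-instance terminating under the skolem chase. -/
def SkTerminating {P C : Type} (R : Set (Rule P C)) : Prop :=
  ∀ I : Inst P C, IsDatabase I → (skChase R I).Finite

/-- An infinite (fair) restricted chase sequence of `R` from `I0`. -/
def InfiniteRCS {P C : Type} (R : Set (Rule P C)) (I0 : Inst P C)
    (Is : ℕ → Inst P C) (rs : ℕ → Rule P C) (hs : ℕ → Assign P C) : Prop :=
  Is 0 = I0 ∧
  (∀ i, rs i ∈ R ∧ ActiveTrigger (rs i) (hs i) (Is i) ∧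
      Is (i + 1) = Is i ∪ (rs i).skApply (hs i)) ∧
  (∀ i j, i ≠ j → ¬ (rs i = rs j ∧ hs i = hs j)) ∧
  (∀ i, ∀ r ∈ R, ∀ h : Assign P C, ActiveTrigger r h (Is i) →
      ∃ j, i ≤ j ∧ ((rs j = r ∧ hs j = h) ∨ ¬ ActiveTrigger r h (Is j)))

/-- `R` is all-instance terminating under the restricted chase. -/
def ResTerminating {P C : Type} (R : Set (Rule P C)) : Prop :=
  ¬ ∃ (I0 : Inst P C) (Is : ℕ → Inst P C) (rs : ℕ → Rule P C) (hs : ℕ → Assign P C),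
      IsDatabase I0 ∧ InfiniteRCS R I0 Is rs hs

/-! ## Heights, sizes, bounded rule sets, MembCheck -/

/-- Every term occurring in the instance `I` has height at most `n`. -/
def instHeightLe {P C : Type} (I : Inst P C) (n : ℕ) : Prop :=
  ∀ a ∈ I, ∀ t ∈ a.args, GTerm.height t ≤ n

/-- The size of a rule: the sum of the sizes of its atoms. -/
def Rule.size {P C : Type} (r : Rule P C) : ℕ :=
  (∑ a ∈ r.body, a.args.length) + ∑ a ∈ r.head, a.args.length

/-- `‖R‖`: the number of symbols occurring in the rule set `R`. -/
def ruleSetSize {P C : Type} (R : Finset (Rule P C)) : ℕ :=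
  ∑ r ∈ R, r.size

/-- `R` is `δ`-bounded under the restricted chase (with `bound = δ(‖R‖)`):
every restricted chase sequence of `R` and any database has height at most `bound`. -/
def DeltaBoundedRes {P C : Type} (R : Set (Rule P C)) (bound : ℕ) : Prop :=
  ∀ I0 : Inst P C, IsDatabase I0 → ∀ π : List (Rule P C), (∀ r ∈ π, r ∈ R) →
    ∀ (Is : ℕ → Inst P C) (hs : ℕ → Assign P C), RCSeq π I0 Is hs →
      ∀ i ≤ π.length, instHeightLe (Is i) bound

/-- The skolem critical database `I^R`: all atoms `P(t)` where `P` occurs in `R`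
(with an arity it has in `R`) and `t` ranges over tuples of constants occurring in
`R` together with the fresh constant `∗ = inr (0,0)`. -/
def skCritDB {P C : Type} (R : Set (Rule P C)) : Inst P C :=
  {a | (∃ r ∈ R, ∃ b : Atom P (RArg C), (b ∈ r.body ∨ b ∈ r.head) ∧
          b.pred = a.pred ∧ b.args.length = a.args.length) ∧
       ∀ t ∈ a.args,
         (∃ c : C, (∃ r ∈ R, ∃ b : Atom P (RArg C), (b ∈ r.body ∨ b ∈ r.head) ∧
             RArg.const c ∈ b.args) ∧ t = GTerm.const (Sum.inl c)) ∨
         t = GTerm.const (Sum.inr (0, 0))}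

/-- The condition under which the procedure `MembCheck(R,δ)` returns `T`. -/
def MembCheckT {P C : Type} (R : Finset (Rule P C)) (δ : ℕ → ℕ) : Prop :=
  instHeightLe (skChase (↑R : Set (Rule P C)) (skCritDB (↑R : Set (Rule P C))))
      (δ (ruleSetSize R)) ∨
  (∀ π : List (Rule P C), π ≠ [] → (∀ r ∈ π, r ∈ R) →
    (∃ (Is : ℕ → Inst P C) (hs : ℕ → Assign P C),
        SkSeq π (skCritDB (↑R : Set (Rule P C))) Is hs ∧
        ∃ i ≤ π.length, ∃ a ∈ Is i, ∃ t ∈ a.args,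
          GTerm.height t = δ (ruleSetSize R) + 1) →
    ∀ rn : ℕ × ℕ → ℕ × ℕ, IsRenaming rn →
      ¬ ActivePath π (renameInst rn (criticalDB π)))

/-! If some element occurs `k + 1` times in `s`, take a shortest infix `t` of `s` in which some
`x` occurs `k + 1` times. Dropping the first or the last entry of `t` leaves an infix in which
every element occurs at most `k` times. Hence `x` occurs exactly `k + 1` times in `t`, no element
occurs more often, and `x` is both the first and the last entry of `t`. -/

namespace List

variable {α : Type}

theorem exists_infix_minimal_length {p : List α → Prop} {s : List α} (hs : p s) :
    ∃ t, t <:+: s ∧ p t ∧ ∀ u, u <:+: t → p u → t.length ≤ u.length := by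
  obtain ⟨t, ⟨hts, ht⟩, hmin⟩ :=
    (measure length).wf.has_min {t | t <:+: s ∧ p t} ⟨s, infix_refl s, hs⟩
  exact ⟨t, hts, ht, fun u hut hu => not_lt.1 (hmin u ⟨hut.trans hts, hu⟩)⟩

variable [DecidableEq α] {l : List α} {a : α}

theorem count_le_count_tail_add_one : l.count a ≤ l.tail.count a + 1 := by
  rw [count_tail]
  split <;> omega

theorem head?_eq_some_of_count_tail_lt (h : l.tail.count a < l.count a) :
    l.head? = some a := by
  rw [count_tail] at h
  by_contra hne
  simp [hne] at h

theorem getLast?_eq_some_of_count_dropLast_lt (h : l.dropLast.count a < l.count a) :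
    l.getLast? = some a := by
  rw [← head?_reverse]
  apply head?_eq_some_of_count_tail_lt
  rwa [tail_reverse, count_reverse, count_reverse]

end List

theorem occCount_eq_count {α : Type} [DecidableEq α] (l : List α) (x : α) :
    occCount l x = l.count x := by
  rw [occCount, Set.ncard_eq_toFinset_card', Set.toFinset_ofPred]
  exact Fin.card_filter_univ_eq_vector_get_eq_count x ⟨l, rfl⟩

theorem isKCycle_of_count_of_shorter_infix {α : Type} [DecidableEq α] {k : ℕ} {t : List α}
    {x : α} (hx : k + 1 ≤ t.count x)
    (hshort : ∀ u, u <:+: t → u.length < t.length → ∀ y, u.count y ≤ k) : IsKCycle k t := by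
  have hne : t ≠ [] := by rintro rfl; simp at hx
  have hlen : t.length - 1 < t.length := Nat.sub_one_lt (List.length_pos_iff.2 hne).ne'
  have htail := hshort t.tail t.tail_suffix.isInfix (by rwa [List.length_tail])
  have hdrop := hshort t.dropLast t.dropLast_prefix.isInfix (by rwa [List.length_dropLast])
  have hle (y : α) : t.count y ≤ k + 1 :=
    List.count_le_count_tail_add_one.trans (Nat.add_le_add_right (htail y) 1)
  refine ⟨hne, ?_, ⟨x, List.count_pos_iff.1 (by omega), ?_⟩, fun y _ => ?_⟩
  · rw [List.head?_eq_some_of_count_tail_lt ((htail x).trans_lt hx),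
      List.getLast?_eq_some_of_count_dropLast_lt ((hdrop x).trans_lt hx)]
  · rw [occCount_eq_count]
    exact le_antisymm (hle x) hx
  · rw [occCount_eq_count]
    exact hle y

theorem exists_kCycle_infix_of_many_occurrences_general
    {S : Type} (k : ℕ) (s : List S)
    (hocc : ∃ x ∈ s, k + 1 ≤ occCount s x) :
    ∃ t : List S, t <:+: s ∧ IsKCycle k t := by
  classical
  obtain ⟨x, -, hx⟩ := hocc
  rw [occCount_eq_count] at hx
  obtain ⟨t, hts, ⟨y, hy⟩, hmin⟩ :=
    List.exists_infix_minimal_length (p := fun t => ∃ y, k + 1 ≤ t.count y) ⟨x, hx⟩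
  refine ⟨t, hts, isKCycle_of_count_of_shorter_infix hy fun u hut hu z => ?_⟩
  by_contra! hz
  exact (hmin u hut ⟨z, hz⟩).not_gt hu

/-- If some element occurs at least `k+1` times in a finite sequence `s`
(`k ≥ 1`), then `s` contains a contiguous subsequence that is a `k`-cycle. -/
theorem exists_kCycle_infix_of_many_occurrences
    {S : Type} (k : ℕ) (hk : 1 ≤ k) (s : List S)
    (hocc : ∃ x ∈ s, k + 1 ≤ occCount s x) :
    ∃ t : List S, t <:+: s ∧ IsKCycle k t :=
  exists_kCycle_infix_of_many_occurrences_general k s hocc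
end

section
/- Let R be a rule set that is δ-bounded under the restricted chase, using p predicates each of arity at most a, and whose skolemization uses l skolem function symbols each of arity at most m ≥ 1. Let I be a database, and let c ≥ 1 be the number of constants occurring in I or in R, with c + l ≥ 2. Then the result of every terminating restricted chase sequence of R and I contains at most p·(c+l)^{a·(N+1)} atoms, where N = Σ_{i=0}^{δ(||R||)} m^i. -/
set_option autoImplicit false

/-!
A δ-bounded rule set only ever produces terms of height at most `δ(‖R‖)`, and every term of the
chase is built from the `c` constants and the `l` skolem symbols, each applied to at most `m`
arguments. A term of height `d + 1` is determined by its head symbol and at most `m` subterms of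
height `≤ d`, so there are at most `(c + l)^N` terms of height `≤ δ(‖R‖)`. An atom is a predicate
together with `a` argument slots, each empty or holding such a term, which gives at most
`p ((c + l)^N + 1)^a ≤ p (c + l)^(a (N + 1))` atoms.
-/

open Set

theorem Set.ncard_univ_pi_const {α : Type*} (s : Set α) (n : ℕ) :
    (pi univ fun _ : Fin n => s).ncard = s.ncard ^ n := by
  rw [← Nat.card_coe_set_eq, Nat.card_congr (Equiv.Set.univPi fun _ : Fin n => s), Nat.card_pi]
  simp [Nat.card_coe_set_eq]

theorem Nat.pow_add_one_le_pow_succ {x : ℕ} (hx : 2 ≤ x) (n : ℕ) : x ^ n + 1 ≤ x ^ (n + 1) := by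
  have := Nat.one_le_pow n x (by omega)
  rw [pow_succ]
  nlinarith

namespace GTerm

variable {C F : Type}

@[simp]
theorem height_const (k : C) : (const k : GTerm C F).height = 0 := by
  simp [height]

theorem height_lt_of_mem {q : F} {ts : List (GTerm C F)} {t : GTerm C F} (h : t ∈ ts) :
    t.height < (func q ts).height := by
  have key : ∀ l : List ℕ, ∀ x ∈ l, x ≤ l.foldr max 0 := by
    intro l
    induction l with
    | nil => simp
    | cons y l ih => grind
  rw [height]
  have := key _ t.height
    (List.mem_map.mpr ⟨⟨t, h⟩, List.mem_attach _ _, rfl⟩ : t.height ∈ ts.attach.map (·.1.height))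
  omega

/-- Terms over the signature with constants `K` and function symbols `S`, where `q ∈ S` has
arity `ar q`. -/
inductive IsOver (K : Set C) (S : Set F) (ar : F → ℕ) : GTerm C F → Prop
  | const {k : C} : k ∈ K → IsOver K S ar (const k)
  | func {q : F} {ts : List (GTerm C F)} : q ∈ S → ts.length = ar q →
      (∀ t ∈ ts, IsOver K S ar t) → IsOver K S ar (func q ts)

def boundedTerms (K : Set C) (S : Set F) (ar : F → ℕ) (d : ℕ) : Set (GTerm C F) :=
  {t | t.IsOver K S ar ∧ t.height ≤ d}

/-- A term as its head symbol and its first `m` arguments, padded with `t₀`. -/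
def encode (m : ℕ) (t₀ : GTerm C F) : GTerm C F → (C ⊕ F) × (Fin m → GTerm C F)
  | const k => (.inl k, fun _ => t₀)
  | func q ts => (.inr q, fun i => ts.getD i t₀)

variable {K : Set C} {S : Set F} {ar : F → ℕ}

theorem mapsTo_encode {m d : ℕ} {t₀ : GTerm C F} (ht₀ : t₀ ∈ boundedTerms K S ar d) :
    MapsTo (encode m t₀) (boundedTerms K S ar (d + 1))
      ((.inl '' K ∪ .inr '' S) ×ˢ pi univ fun _ => boundedTerms K S ar d) := by
  rintro t ⟨hover, hheight⟩
  cases hover with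
  | const hk => exact ⟨.inl ⟨_, hk, rfl⟩, fun _ _ => ht₀⟩
  | @func q ts hq _ hts =>
    refine ⟨.inr ⟨q, hq, rfl⟩, fun i _ => ?_⟩
    show ts.getD i t₀ ∈ boundedTerms K S ar d
    by_cases hi : (i : ℕ) < ts.length
    · rw [List.getD_eq_getElem ts t₀ hi]
      have hlt := height_lt_of_mem (q := q) (List.getElem_mem hi)
      exact ⟨hts _ (List.getElem_mem hi), by omega⟩
    · rwa [List.getD_eq_default ts t₀ (by omega)]

theorem injOn_encode {m : ℕ} (har : ∀ q ∈ S, ar q ≤ m) (t₀ : GTerm C F) :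
    InjOn (encode m t₀) {t | t.IsOver K S ar} := by
  rintro t₁ ht₁ t₂ ht₂ heq
  cases ht₁ with
  | const => cases ht₂ <;> simp_all [encode]
  | @func q ts₁ hq hlen₁ _ =>
    cases ht₂ with
    | const => simp [encode] at heq
    | @func q' ts₂ _ hlen₂ _ =>
      simp only [encode, Prod.mk.injEq, Sum.inr.injEq] at heq
      obtain ⟨rfl, hargs⟩ := heq
      have hm := har q hq
      congr 1
      refine List.ext_getElem (by omega) fun i hi₁ hi₂ => ?_
      simpa [List.getD_eq_getElem, hi₁, hi₂] using congrFun hargs ⟨i, by omega⟩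

theorem boundedTerms_finite_and_ncard_le {m : ℕ} (hK : K.Finite) (hK₀ : K.Nonempty)
    (hS : S.Finite) (har : ∀ q ∈ S, ar q ≤ m) (d : ℕ) :
    (boundedTerms K S ar d).Finite ∧
      (boundedTerms K S ar d).ncard ≤ (K.ncard + S.ncard) ^ ∑ i ∈ Finset.range (d + 1), m ^ i := by
  induction d with
  | zero =>
    have hsub : boundedTerms K S ar 0 ⊆ const '' K := by
      rintro t ⟨hover, hheight⟩
      cases hover with
      | const hk => exact ⟨_, hk, rfl⟩
      | func => simp [height] at hheight
    refine ⟨(hK.image _).subset hsub, ?_⟩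
    calc (boundedTerms K S ar 0).ncard ≤ (const '' K : Set (GTerm C F)).ncard :=
          ncard_le_ncard hsub (hK.image _)
      _ ≤ K.ncard := ncard_image_le hK
      _ ≤ (K.ncard + S.ncard) ^ ∑ i ∈ Finset.range (0 + 1), m ^ i := by simp
  | succ d ih =>
    obtain ⟨k₀, hk₀⟩ := hK₀
    have ht₀ : (const k₀ : GTerm C F) ∈ boundedTerms K S ar d := ⟨.const hk₀, by simp⟩
    have hmaps := mapsTo_encode (m := m) ht₀
    have hinj := (injOn_encode har (const k₀)).mono
      fun t (ht : t ∈ boundedTerms K S ar (d + 1)) => ht.1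
    have hsymb : (.inl '' K ∪ .inr '' S : Set (C ⊕ F)).ncard ≤ K.ncard + S.ncard :=
      (ncard_union_le _ _).trans (add_le_add (ncard_image_le hK) (ncard_image_le hS))
    have htarget := ((hK.image (Sum.inl (β := F))).union (hS.image Sum.inr)).prod
      (Finite.pi (ι := Fin m) fun _ => ih.1)
    refine ⟨.of_injOn hmaps hinj htarget, ?_⟩
    calc (boundedTerms K S ar (d + 1)).ncard
        ≤ (.inl '' K ∪ .inr '' S : Set (C ⊕ F)).ncard * (boundedTerms K S ar d).ncard ^ m := by
          rw [← ncard_univ_pi_const, ← ncard_prod]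
          exact ncard_le_ncard_of_injOn _ hmaps hinj htarget
      _ ≤ (K.ncard + S.ncard) * ((K.ncard + S.ncard) ^ ∑ i ∈ Finset.range (d + 1), m ^ i) ^ m :=
          Nat.mul_le_mul hsymb (Nat.pow_le_pow_left ih.2 m)
      _ = (K.ncard + S.ncard) ^ ∑ i ∈ Finset.range (d + 1 + 1), m ^ i := by
          rw [← pow_mul, ← pow_succ', geom_sum_succ (n := d + 1), mul_comm m]

end GTerm

namespace Atom

variable {P τ : Type}

def atomsOver (Preds : Finset P) (a : ℕ) (T : Set τ) : Set (Atom P τ) :=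
  {b | b.pred ∈ Preds ∧ b.args.length ≤ a ∧ ∀ t ∈ b.args, t ∈ T}

/-- Each of the `a` argument slots of an atom is empty or holds an element of `T`. -/
theorem atomsOver_finite_and_ncard_le (Preds : Finset P) (a : ℕ) {T : Set τ} (hT : T.Finite) :
    (atomsOver Preds a T).Finite ∧
      (atomsOver Preds a T).ncard ≤ Preds.card * (T.ncard + 1) ^ a := by
  set slot : Set (Option τ) := insert none (some '' T)
  set enc : Atom P τ → P × (Fin a → Option τ) := fun b => (b.pred, fun i => b.args[(i : ℕ)]?)
  have hmaps : MapsTo enc (atomsOver Preds a T) ((Preds : Set P) ×ˢ pi univ fun _ => slot) := by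
    rintro b ⟨hpred, -, hargs⟩
    refine ⟨hpred, fun i _ => ?_⟩
    show b.args[(i : ℕ)]? ∈ slot
    by_cases hi : (i : ℕ) < b.args.length
    · rw [List.getElem?_eq_getElem hi]
      exact mem_insert_of_mem _ ⟨_, hargs _ (List.getElem_mem hi), rfl⟩
    · rw [List.getElem?_eq_none (by omega)]
      exact mem_insert _ _
  have hinj : InjOn enc (atomsOver Preds a T) := by
    rintro ⟨p₁, args₁⟩ ⟨-, hlen₁, -⟩ ⟨p₂, args₂⟩ ⟨-, hlen₂, -⟩ heq
    simp only [enc, Prod.mk.injEq] at heq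
    obtain ⟨rfl, hargs⟩ := heq
    congr 1
    refine List.ext_getElem? fun i => ?_
    by_cases hi : i < a
    · exact congrFun hargs ⟨i, hi⟩
    · rw [List.getElem?_eq_none (by simp at hlen₁; omega),
        List.getElem?_eq_none (by simp at hlen₂; omega)]
  have hslot : slot.ncard ≤ T.ncard + 1 :=
    (ncard_insert_le _ _).trans (by grw [ncard_image_le hT])
  have htarget :=
    Preds.finite_toSet.prod (Finite.pi (ι := Fin a) fun _ => (hT.image some).insert none)
  refine ⟨.of_injOn hmaps hinj htarget, ?_⟩
  calc (atomsOver Preds a T).ncard ≤ Preds.card * slot.ncard ^ a := by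
        rw [← ncard_univ_pi_const, ← ncard_coe_finset, ← ncard_prod]
        exact ncard_le_ncard_of_injOn _ hmaps hinj htarget
    _ ≤ Preds.card * (T.ncard + 1) ^ a := by gcongr

end Atom

section Chase

variable {P C : Type}

open Atom

theorem RCSeq.subset_of_skApply_subset {π : List (Rule P C)} {I0 : Inst P C} {Is : ℕ → Inst P C}
    {hs : ℕ → Assign P C} (hseq : RCSeq π I0 Is hs) {Q : Inst P C} (h0 : I0 ⊆ Q)
    (hstep : ∀ r ∈ π, ∀ (h : Assign P C) (I : Inst P C), I ⊆ Q → Trigger r h I → r.skApply h ⊆ Q) :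
    ∀ i ≤ π.length, Is i ⊆ Q := by
  intro i
  induction i with
  | zero => exact fun _ => hseq.1 ▸ h0
  | succ i ih =>
    intro hi
    obtain ⟨hact, hnext⟩ := hseq.2 i (by omega)
    have hI := ih (by omega)
    rw [hnext]
    refine union_subset hI (hstep _ ?_ _ _ hI hact.1)
    rw [List.getD_eq_getElem _ _ (by omega)]
    exact List.getElem_mem _

theorem Atom.mem_varsL {b : Atom P (RArg C)} {v : ℕ} (h : RArg.var v ∈ b.args) : v ∈ b.varsL :=
  List.mem_filterMap.mpr ⟨RArg.var v, h, rfl⟩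

theorem Trigger.apply_mem_of_mem_bodyVars {r : Rule P C} {h : Assign P C} {I : Inst P C}
    (htr : Trigger r h I) {Preds : Finset P} {a : ℕ} {T : Set (GT P C)}
    (hI : I ⊆ atomsOver Preds a T) {v : ℕ} (hv : v ∈ r.bodyVars) : h v ∈ T := by
  obtain ⟨b, hb, hvb⟩ := Finset.mem_biUnion.mp hv
  obtain ⟨x, hx, hxv⟩ := List.mem_filterMap.mp (List.mem_toFinset.mp hvb)
  cases x with
  | const => simp [RArg.toVar?] at hxv
  | var u =>
    obtain rfl : u = v := by simpa [RArg.toVar?] using hxv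
    exact (hI (htr ⟨b, hb, rfl⟩)).2.2 _ (List.mem_map.mpr ⟨_, hx, rfl⟩)

theorem Trigger.skApply_subset_atomsOver {r : Rule P C} {h : Assign P C} {I : Inst P C}
    (htr : Trigger r h I) {Preds : Finset P} {a : ℕ} {K : Set (GConst C)} {S : Set (SkFun P C)}
    {ar : SkFun P C → ℕ}
    (hhead : ∀ b ∈ r.head, b.pred ∈ Preds ∧ b.args.length ≤ a ∧
      ∀ c₀ : C, RArg.const c₀ ∈ b.args → Sum.inl c₀ ∈ K)
    (hsk : ∀ z ∈ r.exVars, (r, z) ∈ S ∧ ar (r, z) = r.frontierList.length)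
    (hI : I ⊆ atomsOver Preds a {t | t.IsOver K S ar}) :
    r.skApply h ⊆ atomsOver Preds a {t | t.IsOver K S ar} := by
  rintro _ ⟨b, hb, rfl⟩
  obtain ⟨hpred, hlen, hconst⟩ := hhead b hb
  refine ⟨hpred, by simpa [Atom.interp] using hlen, ?_⟩
  intro t ht
  obtain ⟨x, hx, rfl⟩ := List.mem_map.mp ht
  cases x with
  | const c₀ => exact .const (hconst c₀ hx)
  | var v =>
    show (r.skolemExt h v).IsOver K S ar
    by_cases hv : v ∈ r.exVars
    · rw [Rule.skolemExt, if_pos hv]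
      refine .func (hsk v hv).1 (by simp [(hsk v hv).2]) fun t ht => ?_
      obtain ⟨w, hw, rfl⟩ := List.mem_map.mp ht
      have hwf : w ∈ r.frontier := (Finset.mem_sort _).mp hw
      exact htr.apply_mem_of_mem_bodyVars hI (Finset.mem_inter.mp hwf).1
    · rw [Rule.skolemExt, if_neg hv]
      have hvh : v ∈ r.headVars :=
        Finset.mem_biUnion.mpr ⟨b, hb, List.mem_toFinset.mpr (mem_varsL hx)⟩
      exact htr.apply_mem_of_mem_bodyVars hI (by simpa [Rule.exVars, hvh] using hv)

def dbConsts (I0 : Inst P C) : Set (GConst C) :=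
  {x | ∃ b ∈ I0, GTerm.const x ∈ b.args}

def ruleSetConsts (R : Finset (Rule P C)) : Set (GConst C) :=
  {x | ∃ c0 : C, x = Sum.inl c0 ∧ ∃ r ∈ R, ∃ b : Atom P (RArg C),
    (b ∈ r.body ∨ b ∈ r.head) ∧ RArg.const c0 ∈ b.args}

def skolemSymbols (R : Finset (Rule P C)) : Set (SkFun P C) :=
  {q | q.1 ∈ R ∧ q.2 ∈ q.1.exVars}

def skolemArity (q : SkFun P C) : ℕ :=
  q.1.frontierList.length

theorem skolemSymbols_finite (R : Finset (Rule P C)) : (skolemSymbols R).Finite :=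
  (R.finite_toSet.biUnion fun r _ => r.exVars.finite_toSet.image (r, ·)).subset
    fun q hq => mem_iUnion₂.mpr ⟨q.1, hq.1, q.2, hq.2, rfl⟩

theorem RCSeq.subset_atomsOver_isOver {R : Finset (Rule P C)} {π : List (Rule P C)}
    {I0 : Inst P C} {Is : ℕ → Inst P C} {hs : ℕ → Assign P C} (hseq : RCSeq π I0 Is hs)
    (hπ : ∀ r ∈ π, r ∈ R) (hI0 : IsDatabase I0) {Preds : Finset P} {a : ℕ}
    (hpredR : ∀ r ∈ R, ∀ b : Atom P (RArg C), (b ∈ r.body ∨ b ∈ r.head) →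
      b.pred ∈ Preds ∧ b.args.length ≤ a)
    (hpredI : ∀ b ∈ I0, b.pred ∈ Preds ∧ b.args.length ≤ a) :
    ∀ i ≤ π.length, Is i ⊆ atomsOver Preds a
      {t | t.IsOver (dbConsts I0 ∪ ruleSetConsts R) (skolemSymbols R) skolemArity} := by
  refine hseq.subset_of_skApply_subset ?_
    fun r hr _ _ hI htr => htr.skApply_subset_atomsOver ?_ ?_ hI
  · intro b hb
    refine ⟨(hpredI b hb).1, (hpredI b hb).2, fun t ht => ?_⟩
    obtain ⟨x, rfl⟩ := hI0.2 b hb t ht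
    exact .const (.inl ⟨b, hb, ht⟩)
  · intro b hb
    obtain ⟨hpred, hlen⟩ := hpredR r (hπ r hr) b (.inr hb)
    exact ⟨hpred, hlen, fun c₀ hc₀ => .inr ⟨c₀, rfl, r, hπ r hr, b, .inr hb, hc₀⟩⟩
  · exact fun z hz => ⟨⟨hπ r hr, hz⟩, rfl⟩

end Chase

theorem deltaBounded_result_atom_bound_general
    {P C : Type} (R : Finset (Rule P C)) (δ : ℕ → ℕ)
    (hbounded : DeltaBoundedRes (↑R : Set (Rule P C)) (δ (ruleSetSize R)))
    (p a l m c : ℕ) (hc : 1 ≤ c) (hcl : 2 ≤ c + l)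
    (Preds : Finset P) (hp : Preds.card = p)
    (I0 : Inst P C) (hI0 : IsDatabase I0)
    -- `R` and `I0` use the `p` predicates in `Preds`, each of arity at most `a`
    (hpredR : ∀ r ∈ R, ∀ b : Atom P (RArg C), (b ∈ r.body ∨ b ∈ r.head) →
      b.pred ∈ Preds ∧ b.args.length ≤ a)
    (hpredI : ∀ b ∈ I0, b.pred ∈ Preds ∧ b.args.length ≤ a)
    -- the skolemization of `R` uses `l` skolem function symbols, each of arity at most `m`
    (hl : Set.ncard {q : SkFun P C | q.1 ∈ R ∧ q.2 ∈ q.1.exVars} = l)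
    (hfr : ∀ r ∈ R, r.frontierList.length ≤ m)
    -- `c` is the number of constants occurring in `I0` or in `R`
    (hcC : Set.ncard
      ({x : GConst C | ∃ b ∈ I0, GTerm.const x ∈ b.args} ∪
       {x : GConst C | ∃ c0 : C, x = Sum.inl c0 ∧ ∃ r ∈ R, ∃ b : Atom P (RArg C),
          (b ∈ r.body ∨ b ∈ r.head) ∧ RArg.const c0 ∈ b.args}) = c)
    -- a terminating restricted chase sequence of `R` and `I0`
    (π : List (Rule P C)) (hπ : ∀ r ∈ π, r ∈ R)
    (Is : ℕ → Inst P C) (hs : ℕ → Assign P C) (hseq : RCSeq π I0 Is hs) :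
    (Is π.length).Finite ∧
      (Is π.length).ncard ≤
        p * (c + l) ^ (a * ((∑ i ∈ Finset.range (δ (ruleSetSize R) + 1), m ^ i) + 1)) := by
  set bound := δ (ruleSetSize R)
  set K := dbConsts I0 ∪ ruleSetConsts R
  have hKc : K.ncard = c := hcC
  have hK : K.ncard ≠ 0 := by omega
  have hshape := hseq.subset_atomsOver_isOver hπ hI0 hpredR hpredI _ le_rfl
  have hheight : instHeightLe (Is π.length) bound := hbounded I0 hI0 π hπ Is hs hseq _ le_rfl
  have hsub : Is π.length ⊆
      Atom.atomsOver Preds a (GTerm.boundedTerms K (skolemSymbols R) skolemArity bound) :=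
    fun b hb => ⟨(hshape hb).1, (hshape hb).2.1,
      fun t ht => ⟨(hshape hb).2.2 t ht, hheight b hb t ht⟩⟩
  obtain ⟨hTfin, hTcard⟩ := GTerm.boundedTerms_finite_and_ncard_le (finite_of_ncard_ne_zero hK)
    (nonempty_of_ncard_ne_zero hK) (skolemSymbols_finite R) (fun q hq => hfr q.1 hq.1) bound
  obtain ⟨hAfin, hAcard⟩ := Atom.atomsOver_finite_and_ncard_le Preds a hTfin
  rw [hKc, show (skolemSymbols R).ncard = l from hl] at hTcard
  refine ⟨hAfin.subset hsub, ?_⟩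
  set N := ∑ i ∈ Finset.range (bound + 1), m ^ i
  calc (Is π.length).ncard ≤ p * ((c + l) ^ N + 1) ^ a := by
        rw [← hp]
        exact (ncard_le_ncard hsub hAfin).trans (hAcard.trans (by gcongr))
    _ ≤ p * (c + l) ^ (a * (N + 1)) := by
        rw [mul_comm a, pow_mul]
        gcongr
        exact Nat.pow_add_one_le_pow_succ hcl N

/-- Bound on the number of atoms in the result of a terminating
restricted chase sequence of a `δ`-bounded rule set. -/
theorem deltaBounded_result_atom_bound
    {P C : Type} (R : Finset (Rule P C)) (δ : ℕ → ℕ) (hδ : ∀ n, 0 < n → 0 < δ n)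
    (hbounded : DeltaBoundedRes (↑R : Set (Rule P C)) (δ (ruleSetSize R)))
    (p a l m c : ℕ) (hm : 1 ≤ m) (hc : 1 ≤ c) (hcl : 2 ≤ c + l)
    (Preds : Finset P) (hp : Preds.card = p)
    (I0 : Inst P C) (hI0 : IsDatabase I0)
    -- `R` and `I0` use the `p` predicates in `Preds`, each of arity at most `a`
    (hpredR : ∀ r ∈ R, ∀ b : Atom P (RArg C), (b ∈ r.body ∨ b ∈ r.head) →
      b.pred ∈ Preds ∧ b.args.length ≤ a)
    (hpredI : ∀ b ∈ I0, b.pred ∈ Preds ∧ b.args.length ≤ a)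
    -- the skolemization of `R` uses `l` skolem function symbols, each of arity at most `m`
    (hl : Set.ncard {q : SkFun P C | q.1 ∈ R ∧ q.2 ∈ q.1.exVars} = l)
    (hfr : ∀ r ∈ R, r.frontierList.length ≤ m)
    -- `c` is the number of constants occurring in `I0` or in `R`
    (hcC : Set.ncard
      ({x : GConst C | ∃ b ∈ I0, GTerm.const x ∈ b.args} ∪
       {x : GConst C | ∃ c0 : C, x = Sum.inl c0 ∧ ∃ r ∈ R, ∃ b : Atom P (RArg C),
          (b ∈ r.body ∨ b ∈ r.head) ∧ RArg.const c0 ∈ b.args}) = c)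
    -- a terminating restricted chase sequence of `R` and `I0`
    (π : List (Rule P C)) (hπ : ∀ r ∈ π, r ∈ R)
    (Is : ℕ → Inst P C) (hs : ℕ → Assign P C) (hseq : RCSeq π I0 Is hs)
    (hterm : ∀ r ∈ R, ∀ h : Assign P C, ¬ ActiveTrigger r h (Is π.length)) :
    (Is π.length).Finite ∧
      (Is π.length).ncard ≤
        p * (c + l) ^ (a * ((∑ i ∈ Finset.range (δ (ruleSetSize R) + 1), m ^ i) + 1)) :=
  deltaBounded_result_atom_bound_general R δ hbounded p a l m c hc hcl Preds hp I0 hI0 hpredR hpredI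
    hl hfr hcC π hπ Is hs hseq
end

section
/- If a rule set R is all-instance terminating under the skolem chase (chase_sk(I,R) is finite for every database I), then R is all-instance terminating under the restricted chase (no database admits an infinite restricted chase sequence of R). -/
set_option autoImplicit false

/-! Every step of a restricted chase sequence applies an active trigger, so it adds an atom that
is new, and that atom is also produced by the skolem chase. The instances of an infinite
restricted chase sequence thus form a strictly increasing chain of subsets of the skolem chase,
which is impossible when the skolem chase is finite. -/

section RestrictedVsSkolem

variable {P C : Type}

theorem Rule.skolemExt_of_mem_bodyVars (r : Rule P C) (h : Assign P C) {v : ℕ}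
    (hv : v ∈ r.bodyVars) : r.skolemExt h v = h v :=
  if_neg fun hex => (Finset.mem_sdiff.mp hex).2 hv

theorem ActiveTrigger.not_skApply_subset {r : Rule P C} {h : Assign P C} {I : Inst P C}
    (hact : ActiveTrigger r h I) : ¬ r.skApply h ⊆ I :=
  hact.2 (r.skolemExt h) fun _ hv => r.skolemExt_of_mem_bodyVars h hv

namespace InfiniteRCS

variable {R : Set (Rule P C)} {I0 : Inst P C} {Is : ℕ → Inst P C} {rs : ℕ → Rule P C}
  {hs : ℕ → Assign P C}

theorem strictMono (hR : InfiniteRCS R I0 Is rs hs) : StrictMono Is := by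
  refine strictMono_nat_of_lt_succ fun i => ?_
  obtain ⟨-, hact, hstep⟩ := hR.2.1 i
  rw [hstep]
  exact Set.ssubset_union_left_iff.mpr hact.not_skApply_subset

theorem subset_skIter (hR : InfiniteRCS R I0 Is rs hs) (i : ℕ) : Is i ⊆ skIter R I0 i := by
  induction i with
  | zero => exact hR.1.le
  | succ i ih =>
    obtain ⟨hr, hact, hstep⟩ := hR.2.1 i
    rw [hstep]
    exact Set.union_subset_union ih fun _ ha => ⟨rs i, hr, hs i, hact.1.trans ih, ha⟩

theorem subset_skChase (hR : InfiniteRCS R I0 Is rs hs) (i : ℕ) : Is i ⊆ skChase R I0 :=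
  (hR.subset_skIter i).trans (Set.subset_iUnion (skIter R I0) i)

end InfiniteRCS

end RestrictedVsSkolem

/-- If `R` is all-instance terminating under the skolem chase, then `R`
is all-instance terminating under the restricted chase. -/
theorem resTerminating_of_skTerminating
    {P C : Type} (R : Set (Rule P C)) (h : SkTerminating R) :
    ResTerminating R := by
  rintro ⟨I0, Is, rs, hs, hDB, hR⟩
  exact Set.infinite_of_injective_forall_mem hR.strictMono.injective hR.subset_skChase
    (h I0 hDB).finite_subsets
end
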